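/- The quotient ring ℤ[ζ]/(1 − ζ)^6, where ζ is a primitive 16th root of unity, is isomorphic as a ring to 𝔽₂[x]/((x − 1)^6). -/

import Mathlib

/-!
`𝓞 ℚ(ζ₁₆)` has the integral power basis `1, ζ, …, ζ⁷` with minimal polynomial `Φ₁₆`, so a ring
map out of it is determined by the image of `ζ`, subject only to `Φ₁₆` vanishing there. Since `2`
is totally ramified, `(2) = (1 - ζ)⁸ ⊆ (1 - ζ)⁶`, so `𝓞 / (1 - ζ)⁶` is an `𝔽₂`-algebra in which
`ζ - 1` is nilpotent of order `6`; conversely `Φ₁₆ ≡ (x - 1)⁸ (mod 2)` vanishes at `x` in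
`𝔽₂[x] / (x - 1)⁶`. Hence `ζ ↦ x` and `x ↦ ζ` define mutually inverse ring maps.
-/

open scoped NumberField Nat
open Polynomial

section QuotientOneSubPow

open Ideal

variable {R S : Type*} [CommRing R] [CommRing S]

theorem Ideal.span_one_sub_pow (a : R) (m : ℕ) :
    span {1 - a} ^ m = span {(a - 1) ^ m} := by
  rw [← neg_sub, span_singleton_neg, span_singleton_pow]

theorem Ideal.Quotient.mk_sub_one_pow_eq_zero (a : R) (m : ℕ) :
    (Ideal.Quotient.mk (span {(a - 1) ^ m}) a - 1) ^ m = 0 := by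
  rw [← map_one (Ideal.Quotient.mk _), ← map_sub, ← map_pow, Ideal.Quotient.eq_zero_iff_mem]
  exact mem_span_singleton_self _

theorem Polynomial.aeval_mk_X_eq_mk_map {n : ℕ} (J : Ideal (ZMod n)[X]) (p : ℤ[X]) :
    aeval (Ideal.Quotient.mk J X) p = Ideal.Quotient.mk J (p.map (Int.castRingHom (ZMod n))) := by
  rw [← aeval_map_algebraMap (ZMod n), ← Ideal.Quotient.mkₐ_eq_mk (ZMod n), aeval_algHom_apply,
    aeval_X_left_apply]
  rfl

noncomputable def Polynomial.liftQuotientXSubOnePow (ζ : S) {n m : ℕ}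
    (hn : (n : S) ∈ span {1 - ζ} ^ m) :
    (ZMod n)[X] ⧸ span {(X - 1 : (ZMod n)[X]) ^ m} →+* S ⧸ span {1 - ζ} ^ m :=
  haveI hchar : ringChar (S ⧸ span {1 - ζ} ^ m) ∣ n :=
    ringChar.dvd (by rwa [← map_natCast (Ideal.Quotient.mk _), Ideal.Quotient.eq_zero_iff_mem])
  Ideal.Quotient.lift _ (eval₂RingHom (ZMod.castHom hchar _) (Ideal.Quotient.mk _ ζ)) fun p hp => by
    obtain ⟨q, rfl⟩ := mem_span_singleton'.1 hp
    have hζ := Ideal.Quotient.mk_sub_one_pow_eq_zero ζ m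
    rw [← span_one_sub_pow] at hζ
    rw [map_mul, map_pow, map_sub, map_one, coe_eval₂RingHom, eval₂_X, hζ, mul_zero]

theorem Polynomial.liftQuotientXSubOnePow_mk_X (ζ : S) {n m : ℕ}
    (hn : (n : S) ∈ span {1 - ζ} ^ m) :
    liftQuotientXSubOnePow ζ hn (Ideal.Quotient.mk _ X) = Ideal.Quotient.mk _ ζ := by
  simp [liftQuotientXSubOnePow]

noncomputable def PowerBasis.liftQuotientOneSubGenPow (pb : PowerBasis ℤ S) {n m : ℕ}
    (hf : (X - 1) ^ m ∣ (minpoly ℤ pb.gen).map (Int.castRingHom (ZMod n))) :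
    S ⧸ span {1 - pb.gen} ^ m →+* (ZMod n)[X] ⧸ span {(X - 1 : (ZMod n)[X]) ^ m} :=
  Ideal.Quotient.lift _ (pb.lift (Ideal.Quotient.mk _ X) (by
      rw [aeval_mk_X_eq_mk_map, Ideal.Quotient.eq_zero_iff_mem]
      exact mem_span_singleton.2 hf)).toRingHom fun a ha => by
    rw [span_one_sub_pow] at ha
    obtain ⟨q, rfl⟩ := mem_span_singleton'.1 ha
    have hX := Ideal.Quotient.mk_sub_one_pow_eq_zero (X : (ZMod n)[X]) m
    simp [hX]

theorem PowerBasis.liftQuotientOneSubGenPow_mk_gen (pb : PowerBasis ℤ S) {n m : ℕ}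
    (hf : (X - 1) ^ m ∣ (minpoly ℤ pb.gen).map (Int.castRingHom (ZMod n))) :
    pb.liftQuotientOneSubGenPow hf (Ideal.Quotient.mk _ pb.gen) = Ideal.Quotient.mk _ X := by
  simp [liftQuotientOneSubGenPow]

noncomputable def PowerBasis.quotientOneSubGenPowEquiv (pb : PowerBasis ℤ S) {n m : ℕ}
    (hn : (n : S) ∈ span {1 - pb.gen} ^ m)
    (hf : (X - 1) ^ m ∣ (minpoly ℤ pb.gen).map (Int.castRingHom (ZMod n))) :
    S ⧸ span {1 - pb.gen} ^ m ≃+* (ZMod n)[X] ⧸ span {(X - 1 : (ZMod n)[X]) ^ m} :=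
  RingEquiv.ofRingHom (pb.liftQuotientOneSubGenPow hf) (liftQuotientXSubOnePow pb.gen hn)
    (Ideal.Quotient.ringHom_ext <| ringHom_ext' (RingHom.ext_zmod _ _) <| by
      simp [liftQuotientXSubOnePow_mk_X, liftQuotientOneSubGenPow_mk_gen])
    (Ideal.Quotient.ringHom_ext <| RingHom.toIntAlgHom_injective <| pb.algHom_ext <| by
      simp [liftQuotientXSubOnePow_mk_X, liftQuotientOneSubGenPow_mk_gen])

theorem PowerBasis.quotientOneSubGenPowEquiv_mk_gen (pb : PowerBasis ℤ S) {n m : ℕ}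
    (hn : (n : S) ∈ span {1 - pb.gen} ^ m)
    (hf : (X - 1) ^ m ∣ (minpoly ℤ pb.gen).map (Int.castRingHom (ZMod n))) :
    pb.quotientOneSubGenPowEquiv hn hf (Ideal.Quotient.mk _ pb.gen) = Ideal.Quotient.mk _ X :=
  pb.liftQuotientOneSubGenPow_mk_gen hf

end QuotientOneSubPow

theorem Polynomial.cyclotomic_prime_pow_eq_X_sub_one_pow (R : Type*) [Ring R] {p : ℕ}
    [hp : Fact p.Prime] [CharP R p] (k : ℕ) :
    cyclotomic (p ^ (k + 1)) R = (X - 1) ^ φ (p ^ (k + 1)) := by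
  have h := cyclotomic_mul_prime_pow_eq R (m := 1) hp.out.not_dvd_one k.succ_pos
  rw [mul_one, cyclotomic_one] at h
  rw [h, Nat.totient_prime_pow_succ hp.out, Nat.mul_sub_one, ← pow_succ]
  rfl

section RingOfIntegers

open NumberField

variable {K : Type*} [Field K]

theorem IsPrimitiveRoot.minpoly_int_eq_cyclotomic [CharZero K] {n : ℕ} [NeZero n] {ζ : 𝓞 K}
    (hζ : IsPrimitiveRoot ζ n) : minpoly ℤ ζ = cyclotomic n ℤ := by
  rw [← RingOfIntegers.minpoly_coe,
    cyclotomic_eq_minpoly (hζ.map_of_injective RingOfIntegers.coe_injective) (NeZero.pos n)]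

theorem IsPrimitiveRoot.natCast_mem_span_one_sub_pow_totient [NumberField K] {p k : ℕ}
    [Fact p.Prime] [IsCyclotomicExtension {p ^ (k + 1)} ℚ K] {ζ : 𝓞 K}
    (hζ : IsPrimitiveRoot ζ (p ^ (k + 1))) :
    (p : 𝓞 K) ∈ Ideal.span {1 - ζ} ^ φ (p ^ (k + 1)) := by
  have hζK := hζ.map_of_injective RingOfIntegers.coe_injective
  have h := IsCyclotomicExtension.Rat.map_eq_span_zeta_sub_one_pow p k hζK
  rw [IsCyclotomicExtension.Rat.finrank (p ^ (k + 1)) K,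
    show hζK.toInteger = ζ from rfl] at h
  rw [← neg_sub, Ideal.span_singleton_neg, ← h]
  simpa using Ideal.mem_map_of_mem (algebraMap ℤ (𝓞 K)) (Ideal.mem_span_singleton_self (p : ℤ))

end RingOfIntegers

/-- The quotient ring ℤ[ζ]/(1 − ζ)⁶, ζ a primitive 16th root of unity, is
isomorphic as a ring to 𝔽₂[x]/((x − 1)⁶), via an isomorphism sending the
class of ζ to the class of x. -/
theorem stmt_14 (ζ : 𝓞 (CyclotomicField 16 ℚ)) (hζ : IsPrimitiveRoot ζ 16) :
    ∃ e : (𝓞 (CyclotomicField 16 ℚ) ⧸ (Ideal.span {1 - ζ}) ^ 6) ≃+*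
        (Polynomial (ZMod 2) ⧸ Ideal.span {(X - 1 : Polynomial (ZMod 2)) ^ 6}),
      e (Ideal.Quotient.mk _ ζ) = Ideal.Quotient.mk _ X := by
  have h16 : IsCyclotomicExtension {2 ^ (3 + 1)} ℚ (CyclotomicField 16 ℚ) :=
    CyclotomicField.isCyclotomicExtension 16 ℚ
  obtain ⟨pb, rfl⟩ : ∃ pb : PowerBasis ℤ (𝓞 (CyclotomicField 16 ℚ)), pb.gen = ζ :=
    ⟨_, (hζ.map_of_injective NumberField.RingOfIntegers.coe_injective).integralPowerBasis_gen⟩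
  have hφ : 6 ≤ φ (2 ^ (3 + 1)) := by decide
  have h2 : ((2 : ℕ) : 𝓞 (CyclotomicField 16 ℚ)) ∈ Ideal.span {1 - pb.gen} ^ 6 :=
    Ideal.pow_le_pow_right hφ (hζ.natCast_mem_span_one_sub_pow_totient (p := 2) (k := 3))
  have hf : (X - 1) ^ 6 ∣ (minpoly ℤ pb.gen).map (Int.castRingHom (ZMod 2)) := by
    rw [hζ.minpoly_int_eq_cyclotomic, map_cyclotomic, show 16 = 2 ^ (3 + 1) from rfl,
      cyclotomic_prime_pow_eq_X_sub_one_pow]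
    exact pow_dvd_pow _ hφ
  exact ⟨pb.quotientOneSubGenPowEquiv h2 hf, pb.quotientOneSubGenPowEquiv_mk_gen h2 hf⟩
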